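/- arXiv:1709.08194 — 6 statements merged into one kernel-verified Lean document; each statement's English description precedes it below -/
import Mathlib

section
/- Let A be the (M+1)×(M+1) real symmetric tridiagonal matrix with zero diagonal and subdiagonal entries √1, √2, ..., √M, and let H = diag(h_0,...,h_M) with h_j ≤ 0 for all j and h_M < 0. Then for every nonzero integer m and real k ≠ 0, every eigenvalue of the matrix A_m = -i·m·k·A + H has strictly negative real part. -/
/-!
Take an eigenvector `v` of `c • A + H` with `c = -i m k` purely imaginary. Since `A` is real
symmetric, `v* (c • A) v` is purely imaginary, so taking real parts of `v* (c • A + H) v = μ ‖v‖²`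
gives `re μ · ‖v‖² = ∑ h_j |v_j|² ≤ 0`. If `re μ ≥ 0`, every term vanishes, hence `v_M = 0`.
As `c • A + H` is tridiagonal with nonzero subdiagonal `c √j`, the rows of the eigenvalue
equation, read from the bottom up, then force `v_{M-1} = ⋯ = v_0 = 0`, a contradiction.
-/

/-- The `(M+1) × (M+1)` Jacobi matrix of the (normalized, probabilists') Hermite
polynomials: zero diagonal and sub/super-diagonal entries `√1, √2, …, √M`. -/
noncomputable def hermiteJacobi (M : ℕ) : Matrix (Fin (M + 1)) (Fin (M + 1)) ℝ :=
  fun i j =>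
    if (i : ℕ) + 1 = (j : ℕ) then Real.sqrt ((i : ℕ) + 1)
    else if (j : ℕ) + 1 = (i : ℕ) then Real.sqrt ((j : ℕ) + 1) else 0

open Matrix

theorem Matrix.exists_mulVec_eq_smul_of_isRoot_charpoly {R n : Type*} [CommRing R] [IsDomain R]
    [Fintype n] [DecidableEq n] {B : Matrix n n R} {μ : R} (hμ : B.charpoly.IsRoot μ) :
    ∃ v ≠ 0, B *ᵥ v = μ • v := by
  rw [← charpoly_toLin', ← Module.End.hasEigenvalue_iff_isRoot_charpoly] at hμ
  obtain ⟨v, hv⟩ := hμ.exists_hasEigenvector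
  exact ⟨v, hv.2, by simpa using hv.apply_eq_smul⟩

/-- For an upper Hessenberg matrix with nonzero subdiagonal, an eigenvector is determined by its
last coordinate. -/
theorem Matrix.eq_zero_of_mulVec_eq_smul_of_last_eq_zero {R : Type*} [CommRing R]
    [NoZeroDivisors R] {n : ℕ} {B : Matrix (Fin (n + 1)) (Fin (n + 1)) R}
    (hHess : ∀ i j : Fin (n + 1), (j : ℕ) + 1 < i → B i j = 0)
    (hsub : ∀ i : Fin n, B i.succ i.castSucc ≠ 0) {μ : R} {v : Fin (n + 1) → R}
    (hv : B *ᵥ v = μ • v) (hlast : v (Fin.last n) = 0) : v = 0 := by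
  suffices ∀ i k : Fin (n + 1), i ≤ k → v k = 0 from funext fun k => this 0 k k.zero_le
  intro i
  induction i using Fin.reverseInduction with
  | last => intro k hk; rwa [Fin.last_le_iff.1 hk]
  | cast i ih =>
    have hrow : B i.succ i.castSucc * v i.castSucc = 0 := by
      have := congrFun hv i.succ
      rw [mulVec, dotProduct, Pi.smul_apply, ih _ le_rfl, smul_zero,
        Finset.sum_eq_single i.castSucc] at this
      · exact this
      · intro k _ hk
        rcases lt_or_gt_of_ne hk with hlt | hgt
        · rw [hHess _ _ (by simp [Fin.lt_def] at hlt ⊢; omega), zero_mul]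
        · rw [ih k (Fin.castSucc_lt_iff_succ_le.1 hgt), mul_zero]
      · simp
    intro k hk
    rcases hk.lt_or_eq with hlt | rfl
    · exact ih k (Fin.castSucc_lt_iff_succ_le.1 hlt)
    · exact (mul_eq_zero.1 hrow).resolve_left (hsub i)

theorem Matrix.star_dotProduct_diagonal_mulVec_self {n : Type*} [Fintype n] [DecidableEq n]
    (d : n → ℝ) (v : n → ℂ) :
    star v ⬝ᵥ (diagonal fun i => (d i : ℂ)) *ᵥ v =
      ((∑ i, d i * Complex.normSq (v i) : ℝ) : ℂ) := by
  simp only [dotProduct, mulVec_diagonal, Pi.star_apply, Complex.star_def, Complex.ofReal_sum,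
    Complex.ofReal_mul, Complex.normSq_eq_conj_mul_self]
  exact Finset.sum_congr rfl fun i _ => by ring

section Dissipative

variable {n : Type*} [Fintype n] [DecidableEq n] {A : Matrix n n ℂ} {c : ℂ} {d : n → ℝ}
  {μ : ℂ} {v : n → ℂ}

theorem re_mul_sum_normSq_eq_of_mulVec_eq_smul (hA : A.IsHermitian) (hc : c.re = 0)
    (hv : (c • A + diagonal fun i => (d i : ℂ)) *ᵥ v = μ • v) :
    μ.re * ∑ i, Complex.normSq (v i) = ∑ i, d i * Complex.normSq (v i) := by
  have hquad := congrArg (fun w => (star v ⬝ᵥ w).re) hv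
  have hv_self : star v ⬝ᵥ v = ((∑ i, Complex.normSq (v i) : ℝ) : ℂ) := by
    simpa using star_dotProduct_diagonal_mulVec_self 1 v
  have hA_real : (star v ⬝ᵥ A *ᵥ v).im = 0 := hA.im_star_dotProduct_mulVec_self v
  simp only [add_mulVec, smul_mulVec, dotProduct_add, dotProduct_smul, smul_eq_mul,
    Complex.add_re, Complex.mul_re, hc, hA_real, star_dotProduct_diagonal_mulVec_self, hv_self,
    Complex.ofReal_re, Complex.ofReal_im] at hquad
  linarith

theorem apply_eq_zero_of_mulVec_eq_smul_of_re_nonneg (hA : A.IsHermitian) (hc : c.re = 0)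
    (hd : ∀ i, d i ≤ 0) (hv : (c • A + diagonal fun i => (d i : ℂ)) *ᵥ v = μ • v)
    (hμ : 0 ≤ μ.re) {i : n} (hi : d i < 0) : v i = 0 := by
  have hterm_nonpos : ∀ j ∈ Finset.univ, d j * Complex.normSq (v j) ≤ 0 :=
    fun j _ => mul_nonpos_of_nonpos_of_nonneg (hd j) (Complex.normSq_nonneg _)
  have hsum : ∑ j, d j * Complex.normSq (v j) = 0 :=
    le_antisymm (Finset.sum_nonpos hterm_nonpos) <|
      re_mul_sum_normSq_eq_of_mulVec_eq_smul hA hc hv ▸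
        mul_nonneg hμ (Finset.sum_nonneg fun j _ => Complex.normSq_nonneg _)
  have := (Finset.sum_eq_zero_iff_of_nonpos hterm_nonpos).1 hsum i (Finset.mem_univ _)
  simpa [hi.ne] using this

end Dissipative

theorem hermiteJacobi_apply_comm (M : ℕ) (i j : Fin (M + 1)) :
    hermiteJacobi M i j = hermiteJacobi M j i := by
  simp only [hermiteJacobi]
  split_ifs <;> first | rfl | omega

theorem isHermitian_hermiteJacobi_map_ofReal (M : ℕ) :
    ((hermiteJacobi M).map Complex.ofReal).IsHermitian := by
  ext i j
  simp [hermiteJacobi_apply_comm M i j]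

theorem hermiteJacobi_apply_of_add_one_lt (M : ℕ) {i j : Fin (M + 1)} (hij : (j : ℕ) + 1 < i) :
    hermiteJacobi M i j = 0 := by
  simp only [hermiteJacobi]
  split_ifs <;> first | rfl | omega

theorem hermiteJacobi_succ_castSucc (M : ℕ) (i : Fin M) :
    hermiteJacobi M i.succ i.castSucc = √((i : ℕ) + 1) := by
  simp only [hermiteJacobi, Fin.val_succ, Fin.val_castSucc]
  split_ifs <;> first | omega | rfl

/-- With `A` the Hermite Jacobi matrix and `H = diag(h₀,…,h_M)` negative
semidefinite with `h_M < 0`, for every nonzero integer `m` and real `k ≠ 0`, every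
eigenvalue of `A_m = -i·m·k·A + H` has strictly negative real part. -/
theorem eigenvalue_re_neg_of_filtered_hermite_jacobi
    (M : ℕ) (h : Fin (M + 1) → ℝ) (hh : ∀ j, h j ≤ 0) (hlast : h (Fin.last M) < 0)
    (m : ℤ) (hm : m ≠ 0) (k : ℝ) (hk : k ≠ 0) (μ : ℂ)
    (hμ : ((-(Complex.I * (m : ℂ) * (k : ℂ))) • (hermiteJacobi M).map Complex.ofReal +
        Matrix.diagonal fun j => ((h j : ℝ) : ℂ)).charpoly.IsRoot μ) :
    μ.re < 0 := by
  obtain ⟨v, hv0, hv⟩ := exists_mulVec_eq_smul_of_isRoot_charpoly hμ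
  by_contra! hμ_re
  have hv_last := apply_eq_zero_of_mulVec_eq_smul_of_re_nonneg
    (isHermitian_hermiteJacobi_map_ofReal M) (by simp) hh hv hμ_re hlast
  refine hv0 (eq_zero_of_mulVec_eq_smul_of_last_eq_zero (fun i j hij => ?_) (fun i => ?_)
    hv hv_last)
  · have hne : i ≠ j := by rintro rfl; omega
    simp [hermiteJacobi_apply_of_add_one_lt M hij, hne]
  · simp [hermiteJacobi_succ_castSucc, hm, hk, diagonal_apply_ne _ Fin.castSucc_lt_succ.ne',
      Real.sqrt_ne_zero', Nat.cast_add_one_pos]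
end

section
/- Let A be a real symmetric tridiagonal matrix with nonzero subdiagonal entries and H a negative semidefinite real diagonal matrix whose last diagonal entry is strictly negative. If a vector r satisfies (-i·m·k·A + H)r = iλ_I·r for some real λ_I and nonzero real m·k, then r = 0; i.e., -i·m·k·A + H has no purely imaginary eigenvalues. -/
/-!
Pair the eigenvalue equation with `r` and take real parts: since `A` is real symmetric,
`r* (-i m k A) r` is purely imaginary, and so is `i λ_I r* r`, leaving `∑ h_j |r_j|² = 0`.
As every `h_j ≤ 0` and `h_M < 0`, this forces `r_M = 0`. The matrix `-i m k A + H - i λ_I`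
annihilates `r` and is tridiagonal with nonzero subdiagonal, so its rows, read from the
bottom up, give `r_{M-1} = 0`, then `r_{M-2} = 0`, and so on.
-/

open Matrix Complex
open scoped ComplexOrder

section QuadraticForm

variable {n : Type*} [Fintype n] [DecidableEq n]

lemma Matrix.re_star_dotProduct_diagonal_ofReal_mulVec (h : n → ℝ) (r : n → ℂ) :
    (star r ⬝ᵥ diagonal (fun j => (h j : ℂ)) *ᵥ r).re = ∑ j, h j * normSq (r j) := by
  simp only [dotProduct, mulVec_diagonal, re_sum]
  refine Finset.sum_congr rfl fun j _ => ?_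
  rw [Pi.star_apply, Complex.star_def, mul_left_comm, ← normSq_eq_conj_mul_self, ← ofReal_mul,
    ofReal_re]

lemma Matrix.IsHermitian.sum_mul_normSq_eq_zero {A : Matrix n n ℂ} (hA : A.IsHermitian)
    (c μ : ℝ) (h : n → ℝ) {r : n → ℂ}
    (hr : (-(I * c) • A + diagonal fun j => (h j : ℂ)) *ᵥ r = (I * μ) • r) :
    ∑ j, h j * normSq (r j) = 0 := by
  have hA_real : (star r ⬝ᵥ A *ᵥ r).im = 0 := hA.im_star_dotProduct_mulVec_self r
  have hnorm_real : (star r ⬝ᵥ r).im = 0 :=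
    (nonneg_iff.mp (dotProduct_star_self_nonneg r)).2.symm
  have hre := congrArg (fun v => (star r ⬝ᵥ v).re) hr
  simp only [add_mulVec, smul_mulVec, dotProduct_add, dotProduct_smul, add_re,
    re_star_dotProduct_diagonal_ofReal_mulVec] at hre
  simpa [hA_real, hnorm_real] using hre

end QuadraticForm

lemma Matrix.eq_zero_of_mulVec_eq_zero_of_subdiag_ne_zero {R : Type*} [Semiring R]
    [NoZeroDivisors R] {M : ℕ} {C : Matrix (Fin (M + 1)) (Fin (M + 1)) R}
    (hband : ∀ i j : Fin (M + 1), (j : ℕ) + 1 < i → C i j = 0)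
    (hsub : ∀ i : Fin M, C i.succ i.castSucc ≠ 0)
    {r : Fin (M + 1) → R} (hr : C *ᵥ r = 0) (hlast : r (Fin.last M) = 0) : r = 0 := by
  suffices ∀ i j, i ≤ j → r j = 0 from funext fun j => this j j le_rfl
  refine Fin.reverseInduction (fun j hj => ?_) (fun i ih j hj => ?_)
  · rwa [Fin.last_le_iff.mp hj]
  obtain hij | rfl := hj.lt_or_eq
  · exact ih j (Fin.castSucc_lt_iff_succ_le.mp hij)
  -- entries of row `i + 1` left of `i` vanish in `C`, those right of `i` in `r`
  have hrow : (C *ᵥ r) i.succ = C i.succ i.castSucc * r i.castSucc := by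
    refine Finset.sum_eq_single_of_mem i.castSucc (Finset.mem_univ _)
      fun j _ hj => show C i.succ j * r j = 0 from ?_
    obtain hlt | hgt := lt_or_gt_of_ne hj
    · rw [hband i.succ j (by rw [Fin.val_succ]; exact Nat.succ_lt_succ hlt), zero_mul]
    · rw [ih j (Fin.castSucc_lt_iff_succ_le.mp hgt), mul_zero]
  rw [hr, Pi.zero_apply, eq_comm, mul_eq_zero] at hrow
  exact hrow.resolve_left (hsub i)

/-- For a real symmetric tridiagonal `A` with nonzero subdiagonal entries
and a negative semidefinite diagonal `H` with strictly negative last entry, the matrix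
`-i·m·k·A + H` (with `m·k ≠ 0`) has no purely imaginary eigenvalue: any vector `r` with
`(-i·m·k·A + H) r = i·λ_I·r` for real `λ_I` vanishes. -/
theorem no_purely_imaginary_eigenvalue
    (M : ℕ) (A : Matrix (Fin (M + 1)) (Fin (M + 1)) ℝ)
    (hsymm : ∀ i j, A i j = A j i)
    (htri : ∀ i j : Fin (M + 1), (i : ℕ) + 1 < (j : ℕ) → A i j = 0)
    (hsub : ∀ i j : Fin (M + 1), (j : ℕ) = (i : ℕ) + 1 → A i j ≠ 0)
    (h : Fin (M + 1) → ℝ) (hh : ∀ j, h j ≤ 0) (hlast : h (Fin.last M) < 0)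
    (m k : ℝ) (hmk : m * k ≠ 0) (lamI : ℝ) (r : Fin (M + 1) → ℂ)
    (hr : ((-(Complex.I * (m : ℂ) * (k : ℂ))) • A.map Complex.ofReal +
        Matrix.diagonal fun j => ((h j : ℝ) : ℂ)).mulVec r
      = (Complex.I * (lamI : ℂ)) • r) :
    r = 0 := by
  have hA : (A.map ofReal).IsHermitian :=
    (isHermitian_iff_isSymm.mpr (IsSymm.ext fun i j => hsymm j i)).map _ fun _ => by simp
  have hsum := hA.sum_mul_normSq_eq_zero (m * k) lamI h (by rwa [ofReal_mul, ← mul_assoc])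
  have hr_last : r (Fin.last M) = 0 := by
    have := (Finset.sum_eq_zero_iff_of_nonpos fun j _ =>
      mul_nonpos_of_nonpos_of_nonneg (hh j) (normSq_nonneg _)).mp hsum (Fin.last M)
      (Finset.mem_univ _)
    simpa [hlast.ne] using this
  set C := (-(I * m * k)) • A.map ofReal + diagonal (fun j => (h j : ℂ)) - (I * lamI) • 1
  have hC : C *ᵥ r = 0 := by
    rw [sub_mulVec, hr, smul_mulVec, one_mulVec, sub_self]
  refine eq_zero_of_mulVec_eq_zero_of_subdiag_ne_zero (C := C) (fun i j hij => ?_) (fun i => ?_)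
    hC hr_last
  · have hji : j ≠ i := fun hji => by subst hji; omega
    simp [C, hji.symm, hsymm i j, htri j i hij]
  · have hA_sub : A i.castSucc i.succ ≠ 0 := hsub _ _ (by simp)
    simp [C, Fin.castSucc_lt_succ.ne', hA_sub, hsymm, mul_ne_zero_iff.mp hmk]
end

section
/- For any square complex matrix B with Jordan decomposition B = X J X⁻¹, where the maximum Jordan block size is β and the maximum real part of the eigenvalues of B is α, the operator 2-norm of exp(tB) satisfies ‖exp(tB)‖ ≤ β‖X‖‖X⁻¹‖ · max_{0≤i≤β-1} (t^i/i!) e^{αt} for all t ≥ 0. -/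
/-- The operator norm of a complex matrix induced by the Euclidean (`ℓ²`) norm. -/
noncomputable def l2OpNorm {n : ℕ} (A : Matrix (Fin n) (Fin n) ℂ) : ℝ :=
  ‖Matrix.toEuclideanCLM (𝕜 := ℂ) A‖

/-!
Write `J = D + N` with `D = diagonal d` and `N` the superdiagonal part, a partial shift. Since the
superdiagonal ones only join equal eigenvalues, `D` and `N` commute, so
`exp (tJ) = exp (tD) exp (tN)`. The first factor is diagonal with entries of modulus
`e^{t Re dᵢ} ≤ e^{αt}`. A nonzero entry of `N^k` needs a run of `k` consecutive superdiagonal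
ones, so `N^β = 0` and `exp (tN)` is the truncated series `∑_{k<β} tᵏ Nᵏ / k!`. As `N Nᴴ` is a
diagonal `0/1` matrix, the C⋆-identity gives `‖Nᵏ‖ ≤ 1`, so this sum has norm at most
`β · max_{k<β} tᵏ/k!`. Conjugation by `X` costs the factor `‖X‖ ‖X⁻¹‖`.
-/

open scoped Matrix.Norms.L2Operator Nat
open Matrix NormedSpace

lemma l2OpNorm_eq_norm {n : ℕ} (A : Matrix (Fin n) (Fin n) ℂ) : l2OpNorm A = ‖A‖ := rfl

theorem norm_pow_le_one_of_norm_one_le {𝔸 : Type*} [NormedRing 𝔸] (h1 : ‖(1 : 𝔸)‖ ≤ 1) {a : 𝔸}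
    (ha : ‖a‖ ≤ 1) (k : ℕ) : ‖a ^ k‖ ≤ 1 := by
  induction k with
  | zero => simpa using h1
  | succ k ih =>
    rw [pow_succ]
    exact (norm_mul_le _ _).trans (mul_le_one₀ ih (norm_nonneg a) ha)

theorem norm_exp_smul_le_sum_of_pow_eq_zero {𝕂 𝔸 : Type*} [RCLike 𝕂] [NormedRing 𝔸]
    [NormedAlgebra 𝕂 𝔸] {N : 𝔸} {β : ℕ} (hN : N ^ β = 0)
    (hpow : ∀ k, ‖N ^ k‖ ≤ 1) (c : 𝕂) :
    ‖exp (c • N)‖ ≤ ∑ k ∈ Finset.range β, ‖c‖ ^ k / k ! := by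
  have hexp : exp (c • N) = ∑ k ∈ Finset.range β, (k !⁻¹ : 𝕂) • (c • N) ^ k := by
    rw [exp_eq_tsum 𝕂]
    refine tsum_eq_sum fun k hk => ?_
    rw [smul_pow, pow_eq_zero_of_le (by simpa using hk) hN, smul_zero, smul_zero]
  rw [hexp]
  refine (norm_sum_le _ _).trans (Finset.sum_le_sum fun k _ => ?_)
  rw [smul_pow, smul_smul, norm_smul, norm_mul, norm_inv, RCLike.norm_natCast, norm_pow,
    div_eq_inv_mul, mul_assoc]
  gcongr
  exact mul_le_of_le_one_right (by positivity) (hpow k)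

namespace Matrix

variable {R : Type*} {n : ℕ}

def partialShift [Zero R] [One R] (p : Fin n → Prop) [DecidablePred p] : Matrix (Fin n) (Fin n) R :=
  of fun i j => if (j : ℕ) = i + 1 ∧ p i then 1 else 0

variable (p : Fin n → Prop) [DecidablePred p]

theorem eq_diagonal_add_partialShift [AddZeroClass R] [One R] {J : Matrix (Fin n) (Fin n) R}
    {d : Fin n → R}
    (hJ : ∀ i j, J i j = if i = j then d i else if (j : ℕ) = i + 1 ∧ p i then 1 else 0) :
    J = diagonal d + partialShift p := by
  ext i j
  by_cases hij : i = j
  · subst hij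
    simp [hJ, partialShift]
  · simp [hJ, partialShift, hij]

theorem commute_diagonal_partialShift [Semiring R] {d : Fin n → R}
    (hd : ∀ i j : Fin n, (j : ℕ) = i + 1 → p i → d i = d j) :
    Commute (diagonal d) (partialShift p) := by
  ext i j
  rw [diagonal_mul, mul_diagonal]
  by_cases h : (j : ℕ) = i + 1 ∧ p i
  · simp [partialShift, h, hd i j h.1 h.2]
  · simp [partialShift, h]

theorem partialShift_pow_apply_ne_zero [Semiring R] {k : ℕ} {i j : Fin n}
    (h : (partialShift p ^ k : Matrix (Fin n) (Fin n) R) i j ≠ 0) :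
    (j : ℕ) = i + k ∧ ∀ l < k, ∃ h : (i : ℕ) + l < n, p ⟨i + l, h⟩ := by
  induction k generalizing i with
  | zero =>
    obtain rfl : i = j := by
      by_contra hij
      exact h (by simp [one_apply_ne hij])
    simp
  | succ k ih =>
    rw [pow_succ', mul_apply] at h
    obtain ⟨m, -, hm⟩ := Finset.exists_ne_zero_of_sum_ne_zero h
    obtain ⟨him, hpi⟩ : (m : ℕ) = i + 1 ∧ p i := by
      by_contra hc
      exact left_ne_zero_of_mul hm (by simp [partialShift, hc])
    obtain ⟨hj, hrun⟩ := ih (right_ne_zero_of_mul hm)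
    refine ⟨by omega, fun l hl => ?_⟩
    rcases l with _ | l
    · exact ⟨i.isLt, hpi⟩
    · obtain ⟨hlt, hpl⟩ := hrun l (by omega)
      refine ⟨by omega, ?_⟩
      convert hpl using 2
      omega

theorem partialShift_pow_eq_zero [Semiring R] {β : ℕ}
    (hp : ∀ i : ℕ, ¬ ∀ l < β, ∃ h : i + l < n, p ⟨i + l, h⟩) :
    (partialShift p ^ β : Matrix (Fin n) (Fin n) R) = 0 := by
  ext i j
  by_contra h
  exact hp i (partialShift_pow_apply_ne_zero p h).2

variable {𝕜 : Type*} [RCLike 𝕜]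

theorem partialShift_mul_conjTranspose :
    (partialShift p * (partialShift p)ᴴ : Matrix (Fin n) (Fin n) 𝕜) =
      diagonal fun i : Fin n => if (i : ℕ) + 1 < n ∧ p i then 1 else 0 := by
  ext i k
  simp only [mul_apply, conjTranspose_apply, partialShift, of_apply, diagonal_apply]
  rw [Fin.sum_univ_eq_sum_range (fun j => (if j = ↑i + 1 ∧ p i then (1 : 𝕜) else 0) *
    star (if j = ↑k + 1 ∧ p k then 1 else 0))]
  by_cases hik : i = k
  · subst hik
    by_cases hp : p i <;> simp [hp, Finset.sum_ite_eq']
  · refine (Finset.sum_eq_zero fun j _ => ?_).trans (if_neg hik).symm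
    have : (i : ℕ) ≠ k := Fin.val_ne_of_ne hik
    split_ifs <;> first | omega | simp

theorem norm_partialShift_le_one : ‖(partialShift p : Matrix (Fin n) (Fin n) 𝕜)‖ ≤ 1 := by
  have h : ‖(partialShift p : Matrix (Fin n) (Fin n) 𝕜)‖ ^ 2 ≤ 1 := by
    rw [sq, ← CStarRing.norm_self_mul_star, star_eq_conjTranspose, partialShift_mul_conjTranspose,
      l2_opNorm_diagonal]
    refine pi_norm_le_iff_of_nonneg zero_le_one |>.mpr fun i => ?_
    split_ifs <;> simp
  exact (sq_le_one_iff₀ (norm_nonneg _)).mp h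

theorem norm_partialShift_pow_le_one (k : ℕ) :
    ‖(partialShift p ^ k : Matrix (Fin n) (Fin n) 𝕜)‖ ≤ 1 := by
  refine norm_pow_le_one_of_norm_one_le ?_ (norm_partialShift_le_one p) k
  rw [← diagonal_one, l2_opNorm_diagonal]
  exact (pi_norm_le_iff_of_nonneg zero_le_one).mpr fun _ => norm_one.le

theorem norm_exp_diagonal_le {m : Type*} [Fintype m] [DecidableEq m] {d : m → ℂ} {α : ℝ}
    (hα : ∀ i, (d i).re ≤ α) : ‖exp (diagonal d)‖ ≤ Real.exp α := by
  rw [exp_diagonal, l2_opNorm_diagonal]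
  refine (pi_norm_le_iff_of_nonneg (Real.exp_pos α).le).mpr fun i => ?_
  rw [Pi.coe_exp, ← Complex.exp_eq_exp_ℂ, Complex.norm_exp]
  exact Real.exp_le_exp.mpr (hα i)

end Matrix

/-- If `B = X * J * X⁻¹` with `J` a Jordan normal form whose Jordan blocks
have size at most `β` and whose eigenvalues have real part at most `α`, then
`‖exp(tB)‖ ≤ β ‖X‖ ‖X⁻¹‖ max_{0 ≤ i ≤ β-1} (tⁱ/i!) e^{αt}` for all `t ≥ 0`. -/
theorem opNorm_exp_le_of_jordan_form
    (n : ℕ) (B X Xinv J : Matrix (Fin n) (Fin n) ℂ)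
    (hX1 : X * Xinv = 1) (hX2 : Xinv * X = 1)
    (hB : B = X * J * Xinv)
    (d : Fin n → ℂ) (sup : Fin n → Prop) [DecidablePred sup]
    -- `J` is upper bidiagonal: diagonal `d`, superdiagonal entries `0` or `1`
    (hJ : ∀ i j : Fin n, J i j =
      if i = j then d i
      else if (j : ℕ) = (i : ℕ) + 1 ∧ sup i then 1 else 0)
    -- superdiagonal ones only join equal eigenvalues (within one Jordan block)
    (hchain : ∀ i j : Fin n, (j : ℕ) = (i : ℕ) + 1 → sup i → d i = d j)
    (β : ℕ) (hβ : 0 < β)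
    -- every Jordan block has size at most `β`: no `β` consecutive superdiagonal ones
    (hblock : ∀ i : ℕ, ¬ ∀ l : ℕ, l < β → ∃ hil : i + l < n, sup ⟨i + l, hil⟩)
    (α : ℝ) (hα : ∀ i, (d i).re ≤ α) :
    ∀ t : ℝ, 0 ≤ t →
      l2OpNorm (NormedSpace.exp ((t : ℂ) • B)) ≤
        (β : ℝ) * l2OpNorm X * l2OpNorm Xinv *
          ((Finset.range β).sup' (Finset.nonempty_range_iff.mpr hβ.ne')
            fun i => t ^ i / (Nat.factorial i)) * Real.exp (α * t) := by
  intro t ht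
  set M : ℝ := (Finset.range β).sup' (Finset.nonempty_range_iff.mpr hβ.ne') fun i => t ^ i / (i !)
  set N : Matrix (Fin n) (Fin n) ℂ := partialShift sup
  have hexpD : ‖exp ((t : ℂ) • diagonal d)‖ ≤ Real.exp (α * t) := by
    rw [← diagonal_smul]
    refine norm_exp_diagonal_le fun i => ?_
    simpa [mul_comm α t] using mul_le_mul_of_nonneg_left (hα i) ht
  have hexpN : ‖exp ((t : ℂ) • N)‖ ≤ ∑ k ∈ Finset.range β, t ^ k / k ! := by
    refine (norm_exp_smul_le_sum_of_pow_eq_zero (partialShift_pow_eq_zero sup hblock)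
      (norm_partialShift_pow_le_one sup) (t : ℂ)).trans_eq ?_
    simp [abs_of_nonneg ht]
  have hsum : ∑ k ∈ Finset.range β, t ^ k / k ! ≤ β * M := by
    simpa using Finset.sum_le_card_nsmul _ (fun i => t ^ i / i !) M
      fun k hk => Finset.le_sup' (fun i => t ^ i / i !) hk
  have hcomm := ((commute_diagonal_partialShift sup hchain).smul_left (t : ℂ)).smul_right (t : ℂ)
  have hexpJ : exp ((t : ℂ) • J) = exp ((t : ℂ) • diagonal d) * exp ((t : ℂ) • N) := by
    rw [eq_diagonal_add_partialShift sup hJ, smul_add, Matrix.exp_add_of_commute _ _ hcomm]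
  have hexpB : exp ((t : ℂ) • B) = X * exp ((t : ℂ) • J) * Xinv := by
    rw [hB, ← smul_mul_assoc, ← mul_smul_comm]
    exact Matrix.exp_units_conj ⟨X, Xinv, hX1, hX2⟩ _
  rw [l2OpNorm_eq_norm, l2OpNorm_eq_norm, l2OpNorm_eq_norm, hexpB, hexpJ]
  calc ‖X * (exp ((t : ℂ) • diagonal d) * exp ((t : ℂ) • N)) * Xinv‖
      ≤ ‖X‖ * (‖exp ((t : ℂ) • diagonal d)‖ * ‖exp ((t : ℂ) • N)‖) * ‖Xinv‖ := by
        grw [norm_mul_le, norm_mul_le, norm_mul_le]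
    _ ≤ ‖X‖ * (Real.exp (α * t) * (β * M)) * ‖Xinv‖ := by
        grw [hexpD, hexpN, hsum]
    _ = _ := by ring
end

section
/- For every integer m ≥ 1: binom(2m, m)/2 = Σ_{l=0}^{m-1} (1/(l+1)) · binom(2l, l) · binom(2(m-l-1), m-l-1). Equivalently, the central binomial coefficients satisfy the Catalan-type convolution binom(2m-1, m-1) = Σ_{l=0}^{m-1} C_l · binom(2(m-1-l), m-1-l), where C_l is the l-th Catalan number. -/
/-! With `B n = centralBinom n`, the recurrences `(n + 1) * B (n + 1) = 2 * (2 * n + 1) * B n` and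
`(n + 1) * catalan n = B n` give `B (n + 1) + 2 * catalan n = 4 * B n`. Substituting this into the
convolution `∑_{i + j = n + 1} catalan i * B j` and applying Segner's recurrence
`catalan (n + 1) = ∑_{i + j = n} catalan i * catalan j` shows, by induction on `n`, that
`2 * ∑_{i + j = n} catalan i * B j = B (n + 1)`; and `B (n + 1) = 2 * choose (2 * n + 1) n`. -/

open Finset Nat

theorem centralBinom_succ_add_two_mul_catalan (n : ℕ) :
    centralBinom (n + 1) + 2 * catalan n = 4 * centralBinom n := by
  refine Nat.eq_of_mul_eq_mul_left n.succ_pos ?_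
  calc (n + 1) * (centralBinom (n + 1) + 2 * catalan n)
      = (n + 1) * centralBinom (n + 1) + 2 * ((n + 1) * catalan n) := by ring
    _ = 2 * (2 * n + 1) * centralBinom n + 2 * centralBinom n := by
      rw [succ_mul_centralBinom_succ, succ_mul_catalan_eq_centralBinom]
    _ = (n + 1) * (4 * centralBinom n) := by ring

theorem two_mul_choose_two_mul_add_one (n : ℕ) :
    2 * (2 * n + 1).choose n = centralBinom (n + 1) := by
  rw [centralBinom_eq_two_mul_choose, mul_add_one, choose_succ_succ, choose_symm_half, two_mul]

theorem two_mul_sum_antidiagonal_catalan_mul_centralBinom (n : ℕ) :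
    2 * ∑ p ∈ antidiagonal n, catalan p.1 * centralBinom p.2 = centralBinom (n + 1) := by
  induction n with
  | zero => simp [catalan_zero, centralBinom]
  | succ n ih =>
    have step (p : ℕ × ℕ) :
        2 * (catalan p.1 * centralBinom (p.2 + 1)) + 4 * (catalan p.1 * catalan p.2) =
          8 * (catalan p.1 * centralBinom p.2) := by
      calc _ = 2 * catalan p.1 * (centralBinom (p.2 + 1) + 2 * catalan p.2) := by ring
        _ = _ := by rw [centralBinom_succ_add_two_mul_catalan]; ring
    have hsum := sum_congr rfl fun p (_ : p ∈ antidiagonal n) ↦ step p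
    rw [sum_add_distrib, ← mul_sum, ← mul_sum, ← mul_sum, ← catalan_succ'] at hsum
    rw [sum_antidiagonal_succ', centralBinom_zero]
    have := centralBinom_succ_add_two_mul_catalan (n + 1)
    linarith

theorem sum_range_catalan_mul_centralBinom (n : ℕ) :
    ∑ l ∈ range (n + 1), catalan l * centralBinom (n - l) = (2 * n + 1).choose n := by
  rw [← sum_antidiagonal_eq_sum_range_succ (fun i j ↦ catalan i * centralBinom j)]
  have h := two_mul_sum_antidiagonal_catalan_mul_centralBinom n
  rw [← two_mul_choose_two_mul_add_one] at h
  exact Nat.eq_of_mul_eq_mul_left two_pos h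

theorem cast_catalan_eq_centralBinom_div {K : Type*} [Field K] [CharZero K] (n : ℕ) :
    (catalan n : K) = centralBinom n / (n + 1) := by
  rw [eq_div_iff n.cast_add_one_ne_zero, ← succ_mul_catalan_eq_centralBinom]
  push_cast
  ring

/-- For `m ≥ 1`,
`binom(2m, m)/2 = Σ_{l=0}^{m-1} (1/(l+1)) binom(2l, l) binom(2(m-l-1), m-l-1)`;
equivalently, `binom(2m-1, m-1) = Σ_{l=0}^{m-1} C_l binom(2(m-1-l), m-1-l)` where
`C_l` is the `l`-th Catalan number. -/
theorem central_binom_catalan_convolution (m : ℕ) (hm : 1 ≤ m) :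
    (((Nat.choose (2 * m) m : ℚ)) / 2 =
      ∑ l ∈ range m, (1 / ((l : ℚ) + 1)) * (Nat.choose (2 * l) l : ℚ) *
        (Nat.choose (2 * (m - l - 1)) (m - l - 1) : ℚ)) ∧
    Nat.choose (2 * m - 1) (m - 1) =
      ∑ l ∈ range m, catalan l * Nat.choose (2 * (m - 1 - l)) (m - 1 - l) := by
  obtain ⟨n, rfl⟩ : ∃ n, m = n + 1 := ⟨m - 1, by omega⟩
  have hconv := sum_range_catalan_mul_centralBinom n
  simp only [centralBinom_eq_two_mul_choose] at hconv
  simp only [show ∀ l, n + 1 - l - 1 = n - l by omega, add_tsub_cancel_right,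
    show 2 * (n + 1) - 1 = 2 * n + 1 by omega]
  refine ⟨?_, hconv.symm⟩
  rw [← centralBinom_eq_two_mul_choose, ← two_mul_choose_two_mul_add_one, ← hconv]
  push_cast
  rw [mul_div_cancel_left₀ _ two_ne_zero]
  refine sum_congr rfl fun l _ ↦ ?_
  rw [cast_catalan_eq_centralBinom_div, centralBinom_eq_two_mul_choose]
  ring
end

section
/- If m_1 ≥ 2m_2 are nonnegative integers, then binom(m_1+1, m_2) = Σ_{l=0}^{m_2} (1/(l+1)) binom(2l, l) binom(m_1 - 2l, m_2 - l) (Jonah's theorem). -/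
/-!
Writing `m₁ = 2 m₂ + j` and `k = m₂`, the identity becomes
`S(k, j) := ∑_{a+b=k} C_a binom(2b+j, b) = binom(2k+j+1, k)`, which holds for every `j`
and is proved by induction on `k` and then on `j`. Pascal's rule on `binom(2b+j+1, b)` gives
`S(k+1, j+1) = S(k+1, j) + S(k, j+2)`, matching Pascal's rule on the right-hand side.
For `j = 0` one uses instead `binom(2b+2, b+1) = 2 binom(2b+1, b)` together with
`C_n + binom(2n, n+1) = binom(2n, n)`.
-/

open Finset

theorem catalan_add_choose_succ_eq_centralBinom (n : ℕ) :
    catalan n + (2 * n).choose (n + 1) = n.centralBinom := by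
  have hchoose : (2 * n).choose (n + 1) * (n + 1) = n.centralBinom * n := by
    rw [Nat.choose_succ_right_eq, Nat.centralBinom, show 2 * n - n = n by omega]
  apply Nat.eq_of_mul_eq_mul_left n.add_one_pos
  rw [mul_add, succ_mul_catalan_eq_centralBinom, mul_comm, hchoose]
  ring

theorem Nat.choose_two_mul_add_two_succ (b : ℕ) :
    (2 * b + 2).choose (b + 1) = 2 * (2 * b + 1).choose b := by
  rw [Nat.choose_succ_succ', Nat.choose_symm_half]
  ring

theorem sum_antidiagonal_catalan_mul_choose (k j : ℕ) :
    ∑ p ∈ antidiagonal k, catalan p.1 * (2 * p.2 + j).choose p.2 =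
      (2 * k + j + 1).choose k := by
  induction k generalizing j with
  | zero => simp
  | succ k ihk =>
    induction j with
    | zero =>
      have hterm (p : ℕ × ℕ) : catalan p.1 * (2 * (p.2 + 1) + 0).choose (p.2 + 1) =
          2 * (catalan p.1 * (2 * p.2 + 1).choose p.2) := by
        rw [show 2 * (p.2 + 1) + 0 = 2 * p.2 + 2 by ring, Nat.choose_two_mul_add_two_succ]
        ring
      rw [Nat.sum_antidiagonal_succ', sum_congr rfl fun p _ ↦ hterm p, ← mul_sum, ihk 1]
      simp only [mul_zero, add_zero, Nat.choose_zero_right, mul_one]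
      rw [Nat.choose_succ_succ', ← Nat.centralBinom_eq_two_mul_choose,
        ← catalan_add_choose_succ_eq_centralBinom, show 2 * k + 1 + 1 = 2 * (k + 1) by ring,
        Nat.choose_symm_of_eq_add (show 2 * (k + 1) = k + (k + 1 + 1) by ring)]
      ring
    | succ j ihj =>
      have hterm (p : ℕ × ℕ) : catalan p.1 * (2 * (p.2 + 1) + (j + 1)).choose (p.2 + 1) =
          catalan p.1 * (2 * (p.2 + 1) + j).choose (p.2 + 1) +
            catalan p.1 * (2 * p.2 + (j + 2)).choose p.2 := by
        rw [show 2 * (p.2 + 1) + (j + 1) = (2 * p.2 + (j + 2)) + 1 by ring, Nat.choose_succ_succ',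
          show 2 * (p.2 + 1) + j = 2 * p.2 + (j + 2) by ring]
        ring
      rw [Nat.sum_antidiagonal_succ'] at ihj ⊢
      simp only [mul_zero, zero_add, Nat.choose_zero_right, mul_one] at ihj ⊢
      rw [sum_congr rfl fun p _ ↦ hterm p, sum_add_distrib, ihk (j + 2), ← add_assoc, ihj,
        show 2 * (k + 1) + (j + 1) + 1 = (2 * k + (j + 2) + 1) + 1 by ring,
        Nat.choose_succ_succ' (2 * k + (j + 2) + 1) k,
        show 2 * k + (j + 2) + 1 = 2 * (k + 1) + j + 1 by ring]
      ring

theorem cast_catalan_eq_div {K : Type*} [Field K] [CharZero K] (n : ℕ) :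
    (catalan n : K) = 1 / ((n : K) + 1) * ((2 * n).choose n : K) := by
  have hmul : ((n : K) + 1) * catalan n = (2 * n).choose n := by
    exact_mod_cast succ_mul_catalan_eq_centralBinom n
  rw [← hmul]
  field_simp

/-- Jonah's theorem: if `m₁ ≥ 2 m₂`, then
`binom(m₁+1, m₂) = Σ_{l=0}^{m₂} (1/(l+1)) binom(2l, l) binom(m₁-2l, m₂-l)`. -/
theorem jonah_theorem (m₁ m₂ : ℕ) (h : 2 * m₂ ≤ m₁) :
    (Nat.choose (m₁ + 1) m₂ : ℚ) =
      ∑ l ∈ range (m₂ + 1), (1 / ((l : ℚ) + 1)) * (Nat.choose (2 * l) l : ℚ) *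
        (Nat.choose (m₁ - 2 * l) (m₂ - l) : ℚ) := by
  obtain ⟨j, rfl⟩ := Nat.exists_eq_add_of_le h
  have hterm : ∀ l ∈ range (m₂ + 1), (1 / ((l : ℚ) + 1)) * (Nat.choose (2 * l) l : ℚ) *
      (Nat.choose (2 * m₂ + j - 2 * l) (m₂ - l) : ℚ) =
        ((catalan l * (2 * (m₂ - l) + j).choose (m₂ - l) : ℕ) : ℚ) := by
    intro l hl
    rw [mem_range] at hl
    rw [show 2 * m₂ + j - 2 * l = 2 * (m₂ - l) + j by omega, ← cast_catalan_eq_div]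
    push_cast
    rfl
  rw [sum_congr rfl hterm, ← Nat.cast_sum,
    ← Nat.sum_antidiagonal_eq_sum_range_succ (fun a b ↦ catalan a * (2 * b + j).choose b),
    sum_antidiagonal_catalan_mul_choose]
end

section
/- Suppose nonnegative functions g_m: [0,∞) → ℝ satisfy g_1(t) ≤ K⁽¹⁾(t^M+1)e^{-λt} and, for m ≥ 2, g_m(t) ≤ C ∫₀ᵗ ((t-s)^M+1)e^{-λ(t-s)} · Σ_{l=1}^{m-1} (1/l) g_l(s) g_{m-l}(s) ds, where C, λ, K⁽¹⁾ > 0. Then g_m(t) ≤ K⁽ᵐ⁾(t^M+1)e^{-λt} for all m ≥ 1, where K⁽ᵐ⁾ = C' Σ_{l=1}^{m-1}(1/l)K⁽ˡ⁾K⁽ᵐ⁻ˡ⁾ for m ≥ 2, with C' = C·∫₀^∞ (s^M+1)² e^{-λs} ds. -/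
/-!
Strong induction on `m`. Inserting the bounds for `g l` and `g (m - l)`, `l < m`, into the
Duhamel integrand leaves `((t-s)^M+1)(s^M+1)² e^{-λ(t-s)} e^{-2λs}`, which is at most
`(t^M+1) e^{-λt} · (s^M+1)² e^{-λs}` since `(t-s)^M ≤ t^M` and
`e^{-λ(t-s)} e^{-2λs} = e^{-λt} e^{-λs}`.
The first factor leaves the integral, and the integral of the second over `[0, t]` is at most its
integral over `(0, ∞)`, which is `C' / C`.
-/

open Finset MeasureTheory

noncomputable def decayWeight (M : ℕ) (lam t : ℝ) : ℝ := (t ^ M + 1) * Real.exp (-lam * t)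

theorem decayWeight_nonneg (M : ℕ) (lam : ℝ) {t : ℝ} (ht : 0 ≤ t) : 0 ≤ decayWeight M lam t := by
  unfold decayWeight
  positivity

theorem integrableOn_pow_mul_exp_neg_mul (n : ℕ) {b : ℝ} (hb : 0 < b) :
    IntegrableOn (fun x : ℝ => x ^ n * Real.exp (-b * x)) (Set.Ioi 0) := by
  have hn : (-1 : ℝ) < n := by linarith [(n.cast_nonneg : (0 : ℝ) ≤ n)]
  refine (integrableOn_rpow_mul_exp_neg_mul_rpow hn one_pos hb).congr_fun (fun x _ => ?_)
    measurableSet_Ioi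
  simp only [Real.rpow_one, Real.rpow_natCast]

theorem integrableOn_pow_add_one_sq_mul_exp_neg_mul (M : ℕ) {b : ℝ} (hb : 0 < b) :
    IntegrableOn (fun s : ℝ => (s ^ M + 1) ^ 2 * Real.exp (-b * s)) (Set.Ioi 0) := by
  refine (((integrableOn_pow_mul_exp_neg_mul (2 * M) hb).add
    ((integrableOn_pow_mul_exp_neg_mul M hb).const_mul 2)).add
    (integrableOn_pow_mul_exp_neg_mul 0 hb)).congr_fun (fun x _ => ?_) measurableSet_Ioi
  simp only [Pi.add_apply]
  ring

theorem nonneg_of_quadratic_recursion {K : ℕ → ℝ} {c : ℝ} (hc : 0 ≤ c) (hK1 : 0 ≤ K 1)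
    (hrec : ∀ m, 2 ≤ m → K m = c * ∑ l ∈ Ico 1 m, (1 / (l : ℝ)) * K l * K (m - l)) :
    ∀ m, 1 ≤ m → 0 ≤ K m := by
  intro m
  induction m using Nat.strong_induction_on with
  | _ m ih =>
    intro hm
    obtain rfl | hm2 := hm.eq_or_lt
    · exact hK1
    rw [hrec m hm2]
    refine mul_nonneg hc (sum_nonneg fun l hl => ?_)
    obtain ⟨hl1, hlm⟩ := mem_Ico.mp hl
    have := ih l hlm hl1
    have := ih (m - l) (by omega) (by omega)
    positivity

theorem sum_quadratic_le_of_le_mul {x y : ℕ → ℝ} {m : ℕ} {w : ℝ} (hx : ∀ l, 0 ≤ x l)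
    (hxy : ∀ l ∈ Ico 1 m, x l ≤ y l * w) :
    ∑ l ∈ Ico 1 m, (1 / (l : ℝ)) * x l * x (m - l) ≤
      (∑ l ∈ Ico 1 m, (1 / (l : ℝ)) * y l * y (m - l)) * w ^ 2 := by
  rw [sum_mul]
  refine sum_le_sum fun l hl => ?_
  have hl' : m - l ∈ Ico 1 m := by simp only [mem_Ico] at hl ⊢; omega
  calc (1 / (l : ℝ)) * x l * x (m - l)
      ≤ (1 / (l : ℝ)) * (y l * w) * (y (m - l) * w) := by
        have := (hx l).trans (hxy l hl)
        gcongr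
        exacts [hx _, hxy l hl, hxy _ hl']
    _ = (1 / (l : ℝ)) * y l * y (m - l) * w ^ 2 := by ring

theorem decayWeight_sub_mul_sq_le (M : ℕ) (lam : ℝ) {s t : ℝ} (hs : 0 ≤ s) (hst : s ≤ t) :
    decayWeight M lam (t - s) * decayWeight M lam s ^ 2 ≤
      decayWeight M lam t * ((s ^ M + 1) ^ 2 * Real.exp (-lam * s)) := by
  have hexp : Real.exp (-lam * (t - s)) * Real.exp (-lam * s) ^ 2 =
      Real.exp (-lam * t) * Real.exp (-lam * s) := by
    rw [sq, ← Real.exp_add, ← Real.exp_add, ← Real.exp_add]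
    ring_nf
  have hpow : (t - s) ^ M ≤ t ^ M := by gcongr; linarith
  calc decayWeight M lam (t - s) * decayWeight M lam s ^ 2
      = ((t - s) ^ M + 1) * (s ^ M + 1) ^ 2 *
          (Real.exp (-lam * (t - s)) * Real.exp (-lam * s) ^ 2) := by
        simp only [decayWeight]; ring
    _ ≤ (t ^ M + 1) * (s ^ M + 1) ^ 2 * (Real.exp (-lam * t) * Real.exp (-lam * s)) := by
        rw [hexp]; gcongr
    _ = _ := by simp only [decayWeight]; ring

/-- No integrability of `f` is needed: a nonnegative non-integrable `f` has integral `0`. -/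
theorem intervalIntegral_le_integral_Ioi {f h : ℝ → ℝ} {t : ℝ} (ht : 0 ≤ t)
    (hf : ∀ s ∈ Set.Ioc 0 t, 0 ≤ f s) (hfh : ∀ s ∈ Set.Ioc 0 t, f s ≤ h s)
    (hh : IntegrableOn h (Set.Ioi 0)) (hh0 : ∀ s ∈ Set.Ioi 0, 0 ≤ h s) :
    ∫ s in (0 : ℝ)..t, f s ≤ ∫ s in Set.Ioi 0, h s := by
  rw [intervalIntegral.integral_of_le ht]
  calc ∫ s in Set.Ioc 0 t, f s
      ≤ ∫ s in Set.Ioc 0 t, h s :=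
        integral_mono_of_nonneg (ae_restrict_of_forall_mem measurableSet_Ioc hf)
          (hh.mono_set Set.Ioc_subset_Ioi_self) (ae_restrict_of_forall_mem measurableSet_Ioc hfh)
    _ ≤ ∫ s in Set.Ioi 0, h s :=
        setIntegral_mono_set hh (ae_restrict_of_forall_mem measurableSet_Ioi hh0)
          Set.Ioc_subset_Ioi_self.eventuallyLE

theorem integral_duhamel_le {g : ℕ → ℝ → ℝ} {K : ℕ → ℝ} {M m : ℕ} {lam t : ℝ} (hlam : 0 < lam)
    (ht : 0 ≤ t) (hg0 : ∀ l s, 0 ≤ s → 0 ≤ g l s)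
    (hgK : ∀ l ∈ Ico 1 m, ∀ s, 0 ≤ s → g l s ≤ K l * decayWeight M lam s)
    (hK0 : ∀ l ∈ Ico 1 m, 0 ≤ K l) :
    ∫ s in (0 : ℝ)..t, decayWeight M lam (t - s) *
        ∑ l ∈ Ico 1 m, (1 / (l : ℝ)) * g l s * g (m - l) s ≤
      decayWeight M lam t * (∑ l ∈ Ico 1 m, (1 / (l : ℝ)) * K l * K (m - l)) *
        ∫ s in Set.Ioi 0, (s ^ M + 1) ^ 2 * Real.exp (-lam * s) := by
  set S := ∑ l ∈ Ico 1 m, (1 / (l : ℝ)) * K l * K (m - l)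
  have hS : 0 ≤ S := sum_nonneg fun l hl => by
    have := hK0 l hl
    have := hK0 (m - l) (by simp only [mem_Ico] at hl ⊢; omega)
    positivity
  rw [← integral_const_mul]
  refine intervalIntegral_le_integral_Ioi ht (fun s hs => ?_) (fun s hs => ?_)
    ((integrableOn_pow_add_one_sq_mul_exp_neg_mul M hlam).const_mul _)
    (fun s _ => mul_nonneg (mul_nonneg (decayWeight_nonneg M lam ht) hS) (by positivity))
  · exact mul_nonneg (decayWeight_nonneg M lam (sub_nonneg.2 hs.2)) (sum_nonneg fun l _ => by
      have := hg0 l s hs.1.le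
      have := hg0 (m - l) s hs.1.le
      positivity)
  have hts := decayWeight_nonneg M lam (sub_nonneg.2 hs.2)
  have hsum := sum_quadratic_le_of_le_mul (x := (g · s)) (fun l => hg0 l s hs.1.le)
    fun l hl => hgK l hl s hs.1.le
  calc decayWeight M lam (t - s) * ∑ l ∈ Ico 1 m, (1 / (l : ℝ)) * g l s * g (m - l) s
      ≤ S * (decayWeight M lam (t - s) * decayWeight M lam s ^ 2) := by
        rw [mul_left_comm]; gcongr
    _ ≤ S * (decayWeight M lam t * ((s ^ M + 1) ^ 2 * Real.exp (-lam * s))) :=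
        mul_le_mul_of_nonneg_left (decayWeight_sub_mul_sq_le M lam hs.1.le hs.2) hS
    _ = _ := by ring

/-- Nonnegative functions `g m` satisfying the first-order bound
`g 1 t ≤ K⁽¹⁾ (t^M + 1) e^{-λ t}` and the quadratic Duhamel recursion bound for `m ≥ 2`
satisfy `g m t ≤ K⁽ᵐ⁾ (t^M + 1) e^{-λ t}`, where `K⁽ᵐ⁾` obeys the recursion with
constant `C' = C ∫₀^∞ (s^M + 1)² e^{-λ s} ds`. -/
theorem inductive_decay_estimate
    (M : ℕ) (C lam K1 : ℝ) (hC : 0 < C) (hlam : 0 < lam) (hK1 : 0 < K1)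
    (g : ℕ → ℝ → ℝ) (hgpos : ∀ m : ℕ, ∀ t : ℝ, 0 ≤ t → 0 ≤ g m t)
    (hg1 : ∀ t : ℝ, 0 ≤ t → g 1 t ≤ K1 * (t ^ M + 1) * Real.exp (-lam * t))
    (hgm : ∀ m : ℕ, 2 ≤ m → ∀ t : ℝ, 0 ≤ t →
      g m t ≤ C * ∫ s in (0 : ℝ)..t,
        ((t - s) ^ M + 1) * Real.exp (-lam * (t - s)) *
          ∑ l ∈ Ico 1 m, (1 / (l : ℝ)) * g l s * g (m - l) s)
    (C' : ℝ)
    (hC' : C' = C * ∫ s in Set.Ioi (0 : ℝ), ((s ^ M + 1) ^ 2 * Real.exp (-lam * s)))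
    (K : ℕ → ℝ) (hK1' : K 1 = K1)
    (hKrec : ∀ m : ℕ, 2 ≤ m →
      K m = C' * ∑ l ∈ Ico 1 m, (1 / (l : ℝ)) * K l * K (m - l)) :
    ∀ m : ℕ, 1 ≤ m → ∀ t : ℝ, 0 ≤ t →
      g m t ≤ K m * (t ^ M + 1) * Real.exp (-lam * t) := by
  have hC'0 : 0 ≤ C' :=
    hC' ▸ mul_nonneg hC.le (setIntegral_nonneg measurableSet_Ioi fun s _ => by positivity)
  have hK0 := nonneg_of_quadratic_recursion hC'0 (hK1' ▸ hK1.le) hKrec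
  intro m
  induction m using Nat.strong_induction_on with
  | _ m ih =>
  intro hm t ht
  obtain rfl | hm2 := hm.eq_or_lt
  · exact hK1' ▸ hg1 t ht
  have hduhamel := integral_duhamel_le hlam ht hgpos
    (fun l hl s hs => (ih l (mem_Ico.1 hl).2 (mem_Ico.1 hl).1 s hs).trans_eq (mul_assoc _ _ _))
    (fun l hl => hK0 l (mem_Ico.1 hl).1)
  refine (hgm m hm2 t ht).trans ((mul_le_mul_of_nonneg_left hduhamel hC.le).trans_eq ?_)
  rw [hKrec m hm2, hC']
  unfold decayWeight
  ring
end
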